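/- arXiv:1010.2187 — 2 statements merged into one kernel-verified Lean document; each statement's English description precedes it below -/
import Mathlib

section
/- Let K be a field of characteristic 0 and let N be the n×n nilpotent single Jordan block over K, i.e., the matrix whose (i,j) entry (1-indexed) is 1 if j = i+1 and 0 otherwise. Then the K-vector space {A : A is a symmetric n×n matrix over K and N·A + A·Nᵀ = 0} has dimension ⌊(n+1)/2⌋. -/
open Matrix

/-- The `n × n` nilpotent single Jordan block. -/
def singleJordan (K : Type*) [Field K] (n : ℕ) : Matrix (Fin n) (Fin n) K :=
  Matrix.of fun i j => if (j : ℕ) = (i : ℕ) + 1 then 1 else 0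

/-- The subspace of symmetric matrices `A` with `N * A + A * Nᵀ = 0`. -/
def fixedSymm (K : Type*) [Field K] {n : ℕ} (N : Matrix (Fin n) (Fin n) K) :
    Submodule K (Matrix (Fin n) (Fin n) K) where
  carrier := {A | A.IsSymm ∧ N * A + A * Nᵀ = 0}
  add_mem' := by
    rintro a b ⟨ha1, ha2⟩ ⟨hb1, hb2⟩
    exact ⟨ha1.add hb1, by
      rw [Matrix.mul_add, Matrix.add_mul, add_add_add_comm, ha2, hb2, add_zero]⟩
  zero_mem' := ⟨Matrix.isSymm_zero, by simp⟩
  smul_mem' := by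
    rintro c a ⟨ha1, ha2⟩
    exact ⟨ha1.smul c, by
      rw [Matrix.mul_smul, Matrix.smul_mul, ← smul_add, ha2, smul_zero]⟩


/-!
Extend `A` by zero to `a : ℕ → ℕ → K`. Entrywise, `N * A + A * Nᵀ = 0` says
`a (i + 1) j = -a i (j + 1)`, hence `a i j = (-1) ^ i * a 0 (i + j)`: `A` is a signed Hankel
matrix determined by its first row, which vanishes from index `n` on. Symmetry compares
`a t (t + 1)` with `a (t + 1) t`, which carry opposite signs, so the odd entries of the first row
vanish as `2 ≠ 0`. Conversely every choice of the `⌊(n + 1) / 2⌋` even entries `a 0 (2 * t)`,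
`2 * t < n`, gives a solution.
-/

section

variable {α : Type*} [Zero α] {n : ℕ}

def Matrix.zeroExtend (A : Matrix (Fin n) (Fin n) α) (i j : ℕ) : α :=
  if h : i < n ∧ j < n then A ⟨i, h.1⟩ ⟨j, h.2⟩ else 0

@[simp]
theorem Matrix.zeroExtend_val (A : Matrix (Fin n) (Fin n) α) (i j : Fin n) :
    A.zeroExtend i j = A i j := by
  simp [zeroExtend]

theorem Matrix.zeroExtend_of_le_left (A : Matrix (Fin n) (Fin n) α) {i : ℕ} (hi : n ≤ i)
    (j : ℕ) :
    A.zeroExtend i j = 0 :=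
  dif_neg (by omega)

theorem Matrix.zeroExtend_of_le_right (A : Matrix (Fin n) (Fin n) α) (i : ℕ) {j : ℕ}
    (hj : n ≤ j) :
    A.zeroExtend i j = 0 :=
  dif_neg (by omega)

theorem Matrix.IsSymm.zeroExtend_comm {A : Matrix (Fin n) (Fin n) α} (hA : A.IsSymm) (i j : ℕ) :
    A.zeroExtend i j = A.zeroExtend j i := by
  by_cases h : i < n ∧ j < n
  · rw [zeroExtend, zeroExtend, dif_pos h, dif_pos h.symm, hA.apply]
  · rw [zeroExtend, zeroExtend, dif_neg h, dif_neg (h ∘ And.symm)]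

end

theorem Fin.sum_ite_val_eq {M : Type*} [AddCommMonoid M] {n : ℕ} (f : Fin n → M) (m : ℕ) :
    ∑ k : Fin n, (if (k : ℕ) = m then f k else 0) = if h : m < n then f ⟨m, h⟩ else 0 := by
  split_ifs with h
  · rw [Finset.sum_eq_single_of_mem (⟨m, h⟩ : Fin n) (Finset.mem_univ _)]
    · simp
    · intro k _ hk
      exact if_neg fun hkm => hk (Fin.ext hkm)
  · exact Finset.sum_eq_zero fun k _ => if_neg (by omega)

section

variable {K : Type*} [Field K] {n : ℕ}

theorem singleJordan_mul_apply (A : Matrix (Fin n) (Fin n) K) (i j : Fin n) :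
    (singleJordan K n * A) i j = A.zeroExtend (i + 1) j := by
  simp only [mul_apply, singleJordan, of_apply, ite_mul, one_mul, zero_mul, Fin.sum_ite_val_eq]
  simp [zeroExtend]

theorem mul_singleJordan_transpose_apply (A : Matrix (Fin n) (Fin n) K) (i j : Fin n) :
    (A * (singleJordan K n)ᵀ) i j = A.zeroExtend i (j + 1) := by
  simp only [mul_apply, transpose_apply, singleJordan, of_apply, mul_ite, mul_one, mul_zero,
    Fin.sum_ite_val_eq]
  simp [zeroExtend]

theorem zeroExtend_succ_left {A : Matrix (Fin n) (Fin n) K}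
    (hA : singleJordan K n * A + A * (singleJordan K n)ᵀ = 0) (i j : ℕ) :
    A.zeroExtend (i + 1) j = -A.zeroExtend i (j + 1) := by
  rw [eq_neg_iff_add_eq_zero]
  by_cases hij : i < n ∧ j < n
  · have := congr_fun₂ hA ⟨i, hij.1⟩ ⟨j, hij.2⟩
    rwa [Matrix.add_apply, singleJordan_mul_apply, mul_singleJordan_transpose_apply] at this
  · rcases not_and_or.mp hij with hi | hj
    · rw [A.zeroExtend_of_le_left (by omega), A.zeroExtend_of_le_left (by omega), add_zero]
    · rw [A.zeroExtend_of_le_right _ (by omega), A.zeroExtend_of_le_right _ (by omega), add_zero]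

theorem zeroExtend_eq_neg_one_pow_mul {A : Matrix (Fin n) (Fin n) K}
    (hA : singleJordan K n * A + A * (singleJordan K n)ᵀ = 0) (i j : ℕ) :
    A.zeroExtend i j = (-1) ^ i * A.zeroExtend 0 (i + j) := by
  induction i generalizing j with
  | zero => simp
  | succ i ih =>
    rw [zeroExtend_succ_left hA, ih, pow_succ, Nat.add_right_comm, add_assoc]
    ring

theorem zeroExtend_zero_odd {A : Matrix (Fin n) (Fin n) K} (h2 : (2 : K) ≠ 0) (hAs : A.IsSymm)
    (hA : singleJordan K n * A + A * (singleJordan K n)ᵀ = 0) {s : ℕ} (hs : Odd s) :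
    A.zeroExtend 0 s = 0 := by
  obtain ⟨t, rfl⟩ := hs
  have hsymm := hAs.zeroExtend_comm (t + 1) t
  rw [zeroExtend_eq_neg_one_pow_mul hA (t + 1), zeroExtend_eq_neg_one_pow_mul hA t, pow_succ,
    show t + 1 + t = 2 * t + 1 by ring, show t + (t + 1) = 2 * t + 1 by ring] at hsymm
  have : (2 : K) * (-1) ^ t * A.zeroExtend 0 (2 * t + 1) = 0 := by linear_combination -hsymm
  simpa [h2] using this

def signedHankel (c : ℕ → K) : Matrix (Fin n) (Fin n) K :=
  of fun i j => (-1) ^ (i : ℕ) * c (i + j)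

theorem zeroExtend_signedHankel {c : ℕ → K} (hc : ∀ s, n ≤ s → c s = 0) (i j : ℕ) :
    (signedHankel c : Matrix (Fin n) (Fin n) K).zeroExtend i j = (-1) ^ i * c (i + j) := by
  unfold zeroExtend
  split_ifs with h
  · rfl
  · rw [hc _ (by omega), mul_zero]

theorem signedHankel_mem_fixedSymm {c : ℕ → K} (hodd : ∀ s, Odd s → c s = 0)
    (hc : ∀ s, n ≤ s → c s = 0) : signedHankel c ∈ fixedSymm K (singleJordan K n) := by
  refine ⟨?_, ?_⟩
  · ext i j
    simp only [transpose_apply, signedHankel, of_apply]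
    rcases Nat.even_or_odd ((i : ℕ) + j) with he | ho
    · rw [neg_one_pow_congr (Nat.even_add.mp he), add_comm]
    · rw [add_comm, hodd _ ho, mul_zero, mul_zero]
  · ext i j
    rw [Matrix.add_apply, singleJordan_mul_apply, mul_singleJordan_transpose_apply,
      zeroExtend_signedHankel hc, zeroExtend_signedHankel hc, Matrix.zero_apply, pow_succ,
      Nat.add_right_comm, add_assoc]
    ring

def evenFirstRow : Matrix (Fin n) (Fin n) K →ₗ[K] Fin ((n + 1) / 2) → K where
  toFun A t := A.zeroExtend 0 (2 * t)
  map_add' A B := by ext t; by_cases h : 0 < n ∧ 2 * (t : ℕ) < n <;> simp [zeroExtend, h]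
  map_smul' c A := by ext t; by_cases h : 0 < n ∧ 2 * (t : ℕ) < n <;> simp [zeroExtend, h]

theorem eq_zero_of_evenFirstRow_eq_zero (h2 : (2 : K) ≠ 0) {A : Matrix (Fin n) (Fin n) K}
    (hA : A ∈ fixedSymm K (singleJordan K n)) (h0 : evenFirstRow A = 0) : A = 0 := by
  have hrow : ∀ s, A.zeroExtend 0 s = 0 := by
    intro s
    rcases Nat.even_or_odd' s with ⟨t, rfl | rfl⟩
    · by_cases ht : t < (n + 1) / 2
      · exact congr_fun h0 ⟨t, ht⟩
      · exact A.zeroExtend_of_le_right _ (by omega)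
    · exact zeroExtend_zero_odd h2 hA.1 hA.2 ⟨t, rfl⟩
  ext i j
  rw [← A.zeroExtend_val i j, zeroExtend_eq_neg_one_pow_mul hA.2, hrow, mul_zero,
    Matrix.zero_apply]

theorem exists_mem_fixedSymm_evenFirstRow_eq (d : Fin ((n + 1) / 2) → K) :
    ∃ A ∈ fixedSymm K (singleJordan K n), evenFirstRow A = d := by
  let c : ℕ → K := fun s => if h : s < n ∧ s % 2 = 0 then d ⟨s / 2, by omega⟩ else 0
  have hodd : ∀ s, Odd s → c s = 0 := fun s hs => dif_neg (by rw [Nat.odd_iff] at hs; omega)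
  have hc : ∀ s, n ≤ s → c s = 0 := fun s hs => dif_neg (by omega)
  refine ⟨signedHankel c, signedHankel_mem_fixedSymm hodd hc, funext fun t => ?_⟩
  have ht : 2 * (t : ℕ) < n ∧ 2 * (t : ℕ) % 2 = 0 := by omega
  simp [evenFirstRow, zeroExtend_signedHankel hc, c, ht]

end

/-- The space of symmetric matrices fixed (infinitesimally) by a regular nilpotent Jordan
block has dimension `⌊(n+1)/2⌋`. -/
theorem singleJordan_fixed_dim (K : Type*) [Field K] [CharZero K] (n : ℕ) :
    Module.finrank K (fixedSymm K (singleJordan K n)) = (n + 1) / 2 := by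
  let φ := (evenFirstRow (K := K) (n := n)).domRestrict (fixedSymm K (singleJordan K n))
  have hφ : Function.Bijective φ := by
    refine ⟨(injective_iff_map_eq_zero φ).mpr fun A hA ↦
      Subtype.ext (eq_zero_of_evenFirstRow_eq_zero two_ne_zero A.2 hA), fun d ↦ ?_⟩
    obtain ⟨A, hA, rfl⟩ := exists_mem_fixedSymm_evenFirstRow_eq d
    exact ⟨⟨A, hA⟩, rfl⟩
  rw [(LinearEquiv.ofBijective φ hφ).finrank_eq, Module.finrank_fin_fun]
end

section
/- The K-vector space S^λ = {A : A is a symmetric n×n matrix over K and N_λ·A + A·N_λᵀ = 0} has dimension Σ_{i=1}^{k} ⌊(λ_i + 1)/2⌋ + Σ_{i=1}^{k} (i−1)·λ_i. Equivalently, the projectivization of S^λ is a projective space of dimension Σ_{i=1}^{k} ⌊(λ_i + 1)/2⌋ + Σ_{i=1}^{k} (i−1)·λ_i − 1. -/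
open Matrix

/-- Partial sum `s_r = λ_1 + ⋯ + λ_{r-1}` (where the parts are `lam 0, lam 1, …`). -/
def psum {k : ℕ} (lam : Fin k → ℕ) (r : Fin k) : ℕ :=
  ∑ t ∈ Finset.univ.filter (fun t => t < r), lam t

/-- The `n × n` nilpotent Jordan matrix of type `λ`: its 1-indexed `(i, j)` entry is `1`
if `j = i + 1` and `s_r < i < i + 1 ≤ s_r + λ_r` for some `r`, and `0` otherwise
(here written with 0-indexed `i`, `j`). -/
def jordanNilpotent (K : Type*) [Field K] (n k : ℕ) (lam : Fin k → ℕ) :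
    Matrix (Fin n) (Fin n) K :=
  Matrix.of fun i j =>
    if (j : ℕ) = (i : ℕ) + 1 ∧
        ∃ r : Fin k, psum lam r ≤ (i : ℕ) ∧ (i : ℕ) + 2 ≤ psum lam r + lam r
      then 1 else 0

theorem psum_add_lt {n k : ℕ} (lam : Fin k → ℕ) (hn : ∑ r, lam r = n) (r : Fin k)
    (p : ℕ) (hp : p < lam r) : psum lam r + p < n := by
  have h1 : lam r + psum lam r ≤ ∑ t, lam t := by
    rw [psum, ← Finset.sum_insert (by simp)]
    exact Finset.sum_le_sum_of_subset (Finset.subset_univ _)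
  omega

/-- The index in `Fin n` of the `p`-th position (0-indexed) of the `r`-th block. -/
def blockIdx {n k : ℕ} (lam : Fin k → ℕ) (hn : ∑ r, lam r = n) (r : Fin k) (p : ℕ)
    (hp : p < lam r) : Fin n :=
  ⟨psum lam r + p, psum_add_lt lam hn r p hp⟩

/-!
In block coordinates, `N_λ A + A N_λᵀ = 0` says that every block `X` of `A`, of size
`λ_r × λ_s` and extended by zero, satisfies `X (p + 1) q + X p (q + 1) = 0`. Hence
`X p q = (-1)^q X (p + q) 0`, and `X d 0 = 0` once `d ≥ min λ_r λ_s`: a block is determined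
by `min λ_r λ_s` entries of its first column. Symmetry of `A` determines the blocks below the
diagonal from those above, and in characteristic `0` it kills the odd antidiagonals of a diagonal
block, leaving `⌊(λ_r + 1)/2⌋` free entries there. As `λ` is non-increasing, each pair `r < s`
contributes `λ_s`, which sums to `∑ (i - 1) λ_i`.
-/

section Reindex

variable {m m' : Type*} [Fintype m] [Fintype m'] {R : Type*} [CommRing R]

def symmSolutions (N : Matrix m m R) : Submodule R (Matrix m m R) where
  carrier := {A | A.IsSymm ∧ N * A + A * Nᵀ = 0}
  add_mem' := by
    rintro a b ⟨ha1, ha2⟩ ⟨hb1, hb2⟩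
    exact ⟨ha1.add hb1, by
      rw [Matrix.mul_add, Matrix.add_mul, add_add_add_comm, ha2, hb2, add_zero]⟩
  zero_mem' := ⟨Matrix.isSymm_zero, by simp⟩
  smul_mem' := by
    rintro c a ⟨ha1, ha2⟩
    exact ⟨ha1.smul c, by
      rw [Matrix.mul_smul, Matrix.smul_mul, ← smul_add, ha2, smul_zero]⟩

theorem fixedSymm_eq_symmSolutions (K : Type*) [Field K] {n : ℕ}
    (N : Matrix (Fin n) (Fin n) K) : fixedSymm K N = symmSolutions N := rfl

theorem reindex_mem_symmSolutions_iff (e : m ≃ m') {N A : Matrix m m R} :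
    reindex e e A ∈ symmSolutions (reindex e e N) ↔ A ∈ symmSolutions N := by
  have hsol : reindex e e N * reindex e e A + reindex e e A * (reindex e e N)ᵀ =
      reindexLinearEquiv R R e e (N * A + A * Nᵀ) := by
    rw [transpose_reindex, map_add, ← reindexLinearEquiv_mul R R e e e,
      ← reindexLinearEquiv_mul R R e e e]
    rfl
  change (reindex e e A)ᵀ = reindex e e A ∧ _ = 0 ↔ Aᵀ = A ∧ _ = 0
  rw [hsol, transpose_reindex, (reindex e e).injective.eq_iff, LinearEquiv.map_eq_zero_iff]

theorem symmSolutions_reindex (e : m ≃ m') (N : Matrix m m R) :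
    symmSolutions (reindex e e N) =
      (symmSolutions N).map (reindexLinearEquiv R R e e).toLinearMap := by
  ext B
  obtain ⟨A, rfl⟩ := (reindex e e).surjective B
  rw [Submodule.mem_map_equiv, reindex_mem_symmSolutions_iff, ← coe_reindexLinearEquiv R,
    LinearEquiv.symm_apply_apply]

theorem finrank_symmSolutions_reindex (e : m ≃ m') (N : Matrix m m R) :
    Module.finrank R (symmSolutions (reindex e e N)) = Module.finrank R (symmSolutions N) :=
  (LinearEquiv.ofSubmodules _ _ _ (symmSolutions_reindex e N).symm).finrank_eq.symm

end Reindex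

section Blocks

variable {k : ℕ} (lam : Fin k → ℕ)

theorem psum_add_le_psum {r s : Fin k} (h : r < s) : psum lam r + lam r ≤ psum lam s := by
  rw [psum, psum, add_comm, ← Finset.sum_insert (by simp)]
  refine Finset.sum_le_sum_of_subset fun t ht => ?_
  simp only [Finset.mem_insert, Finset.mem_filter, Finset.mem_univ, true_and] at ht ⊢
  rcases ht with rfl | ht
  exacts [h, ht.trans h]

theorem psum_add_inj {r s : Fin k} {p q : ℕ} (hp : p < lam r) (hq : q < lam s)
    (h : psum lam r + p = psum lam s + q) : r = s ∧ p = q := by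
  rcases lt_trichotomy r s with hrs | rfl | hrs
  · have := psum_add_le_psum lam hrs; omega
  · omega
  · have := psum_add_le_psum lam hrs; omega

abbrev BlockIndex : Type := Σ r : Fin k, Fin (lam r)

noncomputable def blockEquiv {n : ℕ} (hn : ∑ r, lam r = n) : BlockIndex lam ≃ Fin n :=
  Equiv.ofBijective (fun x => blockIdx lam hn x.1 x.2 x.2.2) <|
    (Fintype.bijective_iff_injective_and_card _).mpr ⟨fun ⟨r, p⟩ ⟨s, q⟩ h => by
      obtain ⟨rfl, hpq⟩ := psum_add_inj lam p.2 q.2 (Fin.val_eq_of_eq h)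
      rw [Fin.ext hpq], by simp [hn]⟩

theorem blockEquiv_apply_val {n : ℕ} (hn : ∑ r, lam r = n) (x : BlockIndex lam) :
    (blockEquiv lam hn x : ℕ) = psum lam x.1 + x.2 := rfl

def blockJordan (R : Type*) [Zero R] [One R] : Matrix (BlockIndex lam) (BlockIndex lam) R :=
  of fun i j => if i.1 = j.1 ∧ (j.2 : ℕ) = i.2 + 1 then 1 else 0

theorem jordanNilpotent_eq_reindex (K : Type*) [Field K] {n : ℕ} (hn : ∑ r, lam r = n) :
    jordanNilpotent K n k lam =
      reindex (blockEquiv lam hn) (blockEquiv lam hn) (blockJordan lam K) := by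
  ext i j
  obtain ⟨⟨r, p⟩, rfl⟩ := (blockEquiv lam hn).surjective i
  obtain ⟨⟨s, q⟩, rfl⟩ := (blockEquiv lam hn).surjective j
  simp only [reindex_apply, submatrix_apply, Equiv.symm_apply_apply, jordanNilpotent,
    blockJordan, of_apply, blockEquiv_apply_val]
  congr 1
  apply propext
  constructor
  · rintro ⟨hj, t, ht, ht'⟩
    obtain ⟨rfl, -⟩ := psum_add_inj lam p.2 (show psum lam r + p - psum lam t < lam t by omega)
      (show psum lam r + p = psum lam t + (psum lam r + p - psum lam t) by omega)
    obtain ⟨rfl, hq⟩ := psum_add_inj lam q.2 (show (p : ℕ) + 1 < lam r by omega) (by omega)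
    exact ⟨rfl, hq⟩
  · rintro ⟨rfl, hq⟩
    exact ⟨by omega, r, by omega, by omega⟩

end Blocks

/-- `f` is the zero extension of an `a × b` matrix `X` with `J_a X + X J_bᵀ = 0`, where `J_m` is
the nilpotent Jordan block of size `m`. -/
structure IsJordanBlockSolution {R : Type*} [Ring R] (f : ℕ → ℕ → R) (a b : ℕ) :
    Prop where
  eq_zero_of_le_left : ∀ p q, a ≤ p → f p q = 0
  eq_zero_of_le_right : ∀ p q, b ≤ q → f p q = 0
  add_eq_zero : ∀ p < a, ∀ q < b, f (p + 1) q + f p (q + 1) = 0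

namespace IsJordanBlockSolution

variable {R : Type*} [Ring R] {f : ℕ → ℕ → R} {a b : ℕ}

theorem eq_neg_one_pow_mul_of_le (hf : IsJordanBlockSolution f a b) {q : ℕ} (hq : q ≤ b)
    (p : ℕ) : f p q = (-1) ^ q * f (p + q) 0 := by
  induction q generalizing p with
  | zero => simp
  | succ q ih =>
    rcases lt_or_ge p a with hp | hp
    · rw [eq_neg_of_add_eq_zero_right (hf.add_eq_zero p hp q (by omega)), ih (by omega),
        pow_succ, add_right_comm, add_assoc]
      noncomm_ring
    · rw [hf.eq_zero_of_le_left _ _ hp, hf.eq_zero_of_le_left _ _ (by omega), mul_zero]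

theorem apply_zero_eq_zero (hf : IsJordanBlockSolution f a b) {d : ℕ} (hd : a ≤ d ∨ b ≤ d) :
    f d 0 = 0 := by
  rcases hd with hd | hd
  · exact hf.eq_zero_of_le_left _ _ hd
  · have h := hf.eq_neg_one_pow_mul_of_le le_rfl (d - b)
    rwa [hf.eq_zero_of_le_right _ _ le_rfl, Nat.sub_add_cancel hd, eq_comm,
      neg_one_pow_mul_eq_zero_iff] at h

theorem eq_neg_one_pow_mul (hf : IsJordanBlockSolution f a b) (p q : ℕ) :
    f p q = (-1) ^ q * f (p + q) 0 := by
  rcases le_or_gt q b with hq | hq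
  · exact hf.eq_neg_one_pow_mul_of_le hq p
  · rw [hf.eq_zero_of_le_right _ _ hq.le, hf.apply_zero_eq_zero (Or.inr (by omega)), mul_zero]

theorem apply_zero_eq_zero_of_odd [IsAddTorsionFree R] (hf : IsJordanBlockSolution f a b)
    (hsymm : ∀ p q, f q p = f p q) {d : ℕ} (hd : Odd d) : f d 0 = 0 := by
  have h := hf.eq_neg_one_pow_mul 0 d
  rw [hsymm, zero_add, hd.neg_one_pow, neg_one_mul] at h
  exact self_eq_neg.mp h

end IsJordanBlockSolution

theorem isJordanBlockSolution_neg_one_pow_mul {R : Type*} [Ring R] {a b : ℕ} {h : ℕ → R}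
    (hh : ∀ d, a ≤ d ∨ b ≤ d → h d = 0) :
    IsJordanBlockSolution (fun p q => (-1) ^ q * h (p + q)) a b where
  eq_zero_of_le_left p q hp := by rw [hh _ (Or.inl (by omega)), mul_zero]
  eq_zero_of_le_right p q hq := by rw [hh _ (Or.inr (by omega)), mul_zero]
  add_eq_zero p _ q _ := by
    rw [pow_succ, add_right_comm, add_assoc]
    noncomm_ring

section BlockEntries

variable {k : ℕ} {lam : Fin k → ℕ} {R : Type*} [CommRing R]

def blockEntry (A : Matrix (BlockIndex lam) (BlockIndex lam) R) (r s : Fin k) (p q : ℕ) : R :=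
  if h : p < lam r ∧ q < lam s then A ⟨r, p, h.1⟩ ⟨s, q, h.2⟩ else 0

theorem blockEntry_eq (A : Matrix (BlockIndex lam) (BlockIndex lam) R) {r s : Fin k} {p q : ℕ}
    (hp : p < lam r) (hq : q < lam s) : blockEntry A r s p q = A ⟨r, p, hp⟩ ⟨s, q, hq⟩ :=
  dif_pos ⟨hp, hq⟩

theorem blockEntry_transpose (A : Matrix (BlockIndex lam) (BlockIndex lam) R) (r s : Fin k)
    (p q : ℕ) : blockEntry Aᵀ s r q p = blockEntry A r s p q := by
  unfold blockEntry
  by_cases h : p < lam r ∧ q < lam s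
  · rw [dif_pos h.symm, dif_pos h, transpose_apply]
  · rw [dif_neg (mt And.symm h), dif_neg h]

theorem blockJordan_mul_apply (A : Matrix (BlockIndex lam) (BlockIndex lam) R)
    (i j : BlockIndex lam) :
    (blockJordan lam R * A) i j = blockEntry A i.1 j.1 (i.2 + 1) j.2 := by
  have hJ : ∀ l : BlockIndex lam, blockJordan lam R i l ≠ 0 →
      l.1 = i.1 ∧ (l.2 : ℕ) = i.2 + 1 :=
    fun l hl => by_contra fun h => hl (if_neg fun h' => h ⟨h'.1.symm, h'.2⟩)
  rw [mul_apply]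
  by_cases h : (i.2 : ℕ) + 1 < lam i.1
  · rw [blockEntry_eq A h j.2.2, Finset.sum_eq_single ⟨i.1, i.2 + 1, h⟩]
    · simp [blockJordan]
    · rintro ⟨s, q⟩ - hne
      refine mul_eq_zero_of_left (not_not.mp fun hl => hne ?_) _
      obtain ⟨rfl, hq⟩ := hJ _ hl
      exact congrArg (Sigma.mk _) (Fin.ext hq)
    · simp
  · rw [blockEntry, dif_neg fun h' => h h'.1]
    refine Finset.sum_eq_zero fun ⟨s, q⟩ _ => mul_eq_zero_of_left (not_not.mp fun hl => ?_) _
    obtain ⟨rfl, hq⟩ := hJ _ hl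
    exact h (hq ▸ q.2)

theorem mul_blockJordan_transpose_apply (A : Matrix (BlockIndex lam) (BlockIndex lam) R)
    (i j : BlockIndex lam) :
    (A * (blockJordan lam R)ᵀ) i j = blockEntry A i.1 j.1 i.2 (j.2 + 1) := by
  rw [← transpose_transpose A, ← transpose_mul, transpose_apply, blockJordan_mul_apply,
    blockEntry_transpose, transpose_transpose]

theorem mem_symmSolutions_blockJordan_iff (A : Matrix (BlockIndex lam) (BlockIndex lam) R) :
    A ∈ symmSolutions (blockJordan lam R) ↔
      A.IsSymm ∧ ∀ r s, IsJordanBlockSolution (blockEntry A r s) (lam r) (lam s) := by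
  change A.IsSymm ∧ _ = 0 ↔ _
  refine and_congr_right fun _ => ⟨fun h r s => ⟨?_, ?_, fun p hp q hq => ?_⟩, fun h => ?_⟩
  · exact fun p q hp => dif_neg fun h' => (h'.1.trans_le hp).false
  · exact fun p q hq => dif_neg fun h' => (h'.2.trans_le hq).false
  · simpa only [Matrix.add_apply, Matrix.zero_apply, blockJordan_mul_apply,
      mul_blockJordan_transpose_apply] using congrFun₂ h ⟨r, p, hp⟩ ⟨s, q, hq⟩
  · ext i j
    rw [Matrix.add_apply, blockJordan_mul_apply, mul_blockJordan_transpose_apply,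
      Matrix.zero_apply]
    exact (h i.1 j.1).add_eq_zero _ i.2.2 _ j.2.2

end BlockEntries

section Parameters

variable {k : ℕ} (lam : Fin k → ℕ) {R : Type*} [CommRing R]

/-- Free coordinates of a solution: the even antidiagonals `2e < lam r` of each diagonal block
`(r, r)`, and the antidiagonals `d < min (lam r) (lam s)` of each block `(r, s)` with `r < s`. -/
abbrev Param : Type :=
  (Σ r : Fin k, Fin ((lam r + 1) / 2)) ⊕
    (Σ s : Fin k, Σ r : Fin s, Fin (min (lam (Fin.castLE s.2.le r)) (lam s)))

def paramsOf : Matrix (BlockIndex lam) (BlockIndex lam) R →ₗ[R] Param lam → R where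
  toFun A
    | .inl ⟨r, e⟩ => A ⟨r, 2 * e, by have := e.2; omega⟩ ⟨r, 0, by have := e.2; omega⟩
    | .inr ⟨s, r, d⟩ =>
      A ⟨Fin.castLE s.2.le r, d, by have := d.2; omega⟩ ⟨s, 0, by have := d.2; omega⟩
  map_add' _ _ := by ext (_ | _) <;> rfl
  map_smul' _ _ := by ext (_ | _) <;> rfl

variable {lam}

theorem eq_zero_of_paramsOf_eq_zero [IsAddTorsionFree R]
    {A : Matrix (BlockIndex lam) (BlockIndex lam) R} (hA : A ∈ symmSolutions (blockJordan lam R))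
    (h0 : paramsOf lam A = 0) : A = 0 := by
  obtain ⟨hsymm, hsol⟩ := (mem_symmSolutions_blockJordan_iff A).mp hA
  have hsymm' : ∀ r s p q, blockEntry A s r q p = blockEntry A r s p q := fun r s p q => by
    rw [← blockEntry_transpose, hsymm]
  have upper : ∀ r s : Fin k, r < s → ∀ d, blockEntry A r s d 0 = 0 := by
    intro r s hrs d
    rcases lt_or_ge d (min (lam r) (lam s)) with hd | hd
    · rw [blockEntry_eq A (hd.trans_le (min_le_left _ _)) (by omega)]
      exact congrFun h0 (.inr ⟨s, ⟨r, hrs⟩, d, hd⟩)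
    · exact (hsol r s).apply_zero_eq_zero (by omega)
  have diag : ∀ r d, blockEntry A r r d 0 = 0 := by
    intro r d
    rcases Nat.even_or_odd' d with ⟨e, rfl | rfl⟩
    · rcases lt_or_ge e ((lam r + 1) / 2) with he | he
      · rw [blockEntry_eq A (by omega) (by omega)]
        exact congrFun h0 (.inl ⟨r, e, he⟩)
      · exact (hsol r r).apply_zero_eq_zero (by omega)
    · exact (hsol r r).apply_zero_eq_zero_of_odd (hsymm' r r) (odd_two_mul_add_one e)
  have first_col : ∀ r s d, blockEntry A r s d 0 = 0 := by
    intro r s d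
    rcases lt_trichotomy r s with h | rfl | h
    · exact upper r s h d
    · exact diag r d
    · rw [← hsymm', (hsol s r).eq_neg_one_pow_mul, zero_add, upper s r h, mul_zero]
  ext ⟨r, p⟩ ⟨s, q⟩
  rw [← blockEntry_eq A p.2 q.2, (hsol r s).eq_neg_one_pow_mul, first_col, mul_zero,
    Matrix.zero_apply]

/-- The first column `d ↦ X (d, 0)` of block `(r, s)` of `ofParams c`; the blocks below the
diagonal are the transposes of those above. -/
def firstColumn (c : Param lam → R) (r s : Fin k) (d : ℕ) : R :=
  if h : r < s then
    if hd : d < min (lam r) (lam s) then c (.inr ⟨s, ⟨r, h⟩, d, hd⟩) else 0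
  else if h : s < r then
    (-1) ^ d * if hd : d < min (lam s) (lam r) then c (.inr ⟨r, ⟨s, h⟩, d, hd⟩) else 0
  else if hd : Even d ∧ d / 2 < (lam r + 1) / 2 then c (.inl ⟨r, d / 2, hd.2⟩) else 0

theorem firstColumn_eq_zero (c : Param lam → R) {r s : Fin k} {d : ℕ}
    (hd : lam r ≤ d ∨ lam s ≤ d) : firstColumn c r s d = 0 := by
  unfold firstColumn
  split_ifs with hrs hd' hsr hd' hd'
  · omega
  · rfl
  · omega
  · rw [mul_zero]
  · obtain rfl : r = s := le_antisymm (not_lt.mp hsr) (not_lt.mp hrs)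
    obtain ⟨⟨e, rfl⟩, -⟩ := hd'
    omega
  · rfl

theorem firstColumn_swap (c : Param lam → R) (r s : Fin k) (d : ℕ) :
    firstColumn c s r d = (-1) ^ d * firstColumn c r s d := by
  rcases lt_trichotomy r s with h | rfl | h
  · simp only [firstColumn, dif_neg h.not_gt, dif_pos h]
  · rw [firstColumn, dif_neg (lt_irrefl r), dif_neg (lt_irrefl r)]
    split_ifs with hd
    · rw [hd.1.neg_one_pow, one_mul]
    · rw [mul_zero]
  · simp only [firstColumn, dif_pos h, dif_neg h.not_gt, ← mul_assoc, ← pow_add,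
      Even.neg_one_pow ⟨d, rfl⟩, one_mul]

def ofParams (c : Param lam → R) : Matrix (BlockIndex lam) (BlockIndex lam) R :=
  of fun i j => (-1) ^ (j.2 : ℕ) * firstColumn c i.1 j.1 (i.2 + j.2)

theorem blockEntry_ofParams (c : Param lam → R) (r s : Fin k) (p q : ℕ) :
    blockEntry (ofParams c) r s p q = (-1) ^ q * firstColumn c r s (p + q) := by
  unfold blockEntry
  split_ifs with h
  · rfl
  · rw [firstColumn_eq_zero c (by omega), mul_zero]

theorem ofParams_mem (c : Param lam → R) : ofParams c ∈ symmSolutions (blockJordan lam R) := by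
  refine (mem_symmSolutions_blockJordan_iff _).mpr ⟨?_, fun r s => ?_⟩
  · ext ⟨r, p⟩ ⟨s, q⟩
    simp only [ofParams, transpose_apply, of_apply, firstColumn_swap c r s, add_comm (q : ℕ),
      ← mul_assoc, ← pow_add]
    rw [show (p : ℕ) + (p + q) = q + 2 * p by ring, pow_add, pow_mul, neg_one_sq, one_pow,
      mul_one]
  · simp_rw [funext₂ (blockEntry_ofParams c r s)]
    exact isJordanBlockSolution_neg_one_pow_mul fun d hd => firstColumn_eq_zero c hd

theorem paramsOf_ofParams (c : Param lam → R) : paramsOf lam (ofParams c) = c := by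
  ext (⟨r, e⟩ | ⟨s, r, d⟩)
  · simp [paramsOf, ofParams, firstColumn]
  · have hrs : Fin.castLE s.2.le r < s := r.2
    have hd : (d : ℕ) < min (lam (Fin.castLE s.2.le r)) (lam s) := d.2
    simp only [paramsOf, ofParams, firstColumn, LinearMap.coe_mk, AddHom.coe_mk, of_apply,
      pow_zero, one_mul, add_zero, dif_pos hrs, dif_pos hd]
    rfl

end Parameters

theorem finrank_symmSolutions_blockJordan {k : ℕ} (lam : Fin k → ℕ) (R : Type*) [CommRing R]
    [Nontrivial R] [IsAddTorsionFree R] :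
    Module.finrank R (symmSolutions (blockJordan lam R)) =
      ∑ r, (lam r + 1) / 2 +
        ∑ s : Fin k, ∑ r : Fin s, min (lam (Fin.castLE s.2.le r)) (lam s) := by
  let Φ := (paramsOf lam (R := R)).domRestrict (symmSolutions (blockJordan lam R))
  have hΦ : Function.Bijective Φ :=
    ⟨(injective_iff_map_eq_zero Φ).mpr fun A hA =>
        Subtype.ext (eq_zero_of_paramsOf_eq_zero A.2 hA),
      fun c => ⟨⟨ofParams c, ofParams_mem c⟩, paramsOf_ofParams c⟩⟩
  rw [(LinearEquiv.ofBijective Φ hΦ).finrank_eq, Module.finrank_fintype_fun_eq_card]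
  simp [Fintype.card_sum, Fintype.card_sigma]

theorem jordan_fixed_dim_general (K : Type*) [Field K] [CharZero K] (n k : ℕ)
    (lam : Fin k → ℕ) (hmono : Antitone lam)
    (hn : ∑ r, lam r = n) :
    Module.finrank K (fixedSymm K (jordanNilpotent K n k lam)) =
      (∑ r : Fin k, (lam r + 1) / 2) + ∑ r : Fin k, (r : ℕ) * lam r := by
  rw [fixedSymm_eq_symmSolutions, jordanNilpotent_eq_reindex lam K hn,
    finrank_symmSolutions_reindex, finrank_symmSolutions_blockJordan]
  congr 1
  refine Finset.sum_congr rfl fun s _ => ?_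
  have hmin : ∀ r : Fin s, min (lam (Fin.castLE s.2.le r)) (lam s) = lam s :=
    fun r => min_eq_right (hmono r.2.le)
  simp [hmin]

/-- `S^λ` has dimension `∑ᵢ ⌊(λ_i + 1)/2⌋ + ∑ᵢ (i - 1)·λ_i` (1-indexed `i`; here `r : Fin k`
is 0-indexed, so `(i - 1)` becomes `(r : ℕ)`). -/
theorem jordan_fixed_dim (K : Type*) [Field K] [CharZero K] (n k : ℕ)
    (lam : Fin k → ℕ) (hpos : ∀ r, 1 ≤ lam r) (hmono : Antitone lam)
    (hn : ∑ r, lam r = n) :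
    Module.finrank K (fixedSymm K (jordanNilpotent K n k lam)) =
      (∑ r : Fin k, (lam r + 1) / 2) + ∑ r : Fin k, (r : ℕ) * lam r :=
  jordan_fixed_dim_general K n k lam hmono hn
end
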